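/- Let X be a doubling metric space, E ⊆ X a bounded set and Φ any dimension function. Then lower Φ-dimension of E ≤ lower box dimension of E ≤ upper box dimension of E ≤ upper Φ-dimension of E. -/

import Mathlib

open Set Metric Filter Topology
open scoped ENNReal

noncomputable section

/-- The least number of closed balls of radius `r` needed to cover `E`
(`∞` if there is no finite cover). -/
def coverNumber {X : Type*} [PseudoMetricSpace X] (r : ℝ) (E : Set X) : ℝ≥0∞ :=
  ⨅ (s : Finset X) (_ : E ⊆ ⋃ x ∈ s, closedBall x r), (s.card : ℝ≥0∞)

/-- `Φ : (0,1) → [0,∞)` is a dimension function if `x ^ (1 + Φ x)` decreases to `0`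
as `x` decreases to `0`. -/
def IsDimensionFunction (Φ : ℝ → ℝ) : Prop :=
  (∀ x ∈ Ioo (0:ℝ) 1, 0 ≤ Φ x) ∧
  (∀ x ∈ Ioo (0:ℝ) 1, ∀ y ∈ Ioo (0:ℝ) 1, x ≤ y → x ^ (1 + Φ x) ≤ y ^ (1 + Φ y)) ∧
  Tendsto (fun x : ℝ => x ^ (1 + Φ x)) (nhdsWithin 0 (Ioo 0 1)) (nhds 0)

/-- A metric space is doubling if there is `M ≥ 1` such that every closed ball of radius `R`
can be covered by at most `M` closed balls of radius `R / 2`. -/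
def IsDoublingSpace (X : Type*) [PseudoMetricSpace X] : Prop :=
  ∃ M : ℕ, 1 ≤ M ∧ ∀ (x : X) (R : ℝ), ∃ s : Finset X, s.card ≤ M ∧
    closedBall x R ⊆ ⋃ y ∈ s, closedBall y (R / 2)

/-- The upper `Φ`-dimension. -/
def upperPhiDim {X : Type*} [PseudoMetricSpace X] (Φ : ℝ → ℝ) (E : Set X) : ℝ :=
  sInf {α : ℝ | ∃ c₁ > (0:ℝ), ∃ c₂ > (0:ℝ), ∀ r R : ℝ,
    0 < r → r ≤ R ^ (1 + Φ R) → R ^ (1 + Φ R) ≤ R → R < c₁ → ∀ z ∈ E,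
      coverNumber r (closedBall z R ∩ E) ≤ ENNReal.ofReal (c₂ * (R / r) ^ α)}

/-- The lower `Φ`-dimension. -/
def lowerPhiDim {X : Type*} [PseudoMetricSpace X] (Φ : ℝ → ℝ) (E : Set X) : ℝ :=
  sSup {α : ℝ | ∃ c₁ > (0:ℝ), ∃ c₂ > (0:ℝ), ∀ r R : ℝ,
    0 < r → r ≤ R ^ (1 + Φ R) → R ^ (1 + Φ R) ≤ R → R < c₁ → ∀ z ∈ E,
      ENNReal.ofReal (c₂ * (R / r) ^ α) ≤ coverNumber r (closedBall z R ∩ E)}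

/-- The (upper) Assouad dimension: the upper `Φ`-dimension with `Φ ≡ 0`. -/
def assouadDim {X : Type*} [PseudoMetricSpace X] (E : Set X) : ℝ :=
  upperPhiDim (fun _ => 0) E

/-- The lower Assouad dimension: the lower `Φ`-dimension with `Φ ≡ 0`. -/
def lowerAssouadDim {X : Type*} [PseudoMetricSpace X] (E : Set X) : ℝ :=
  lowerPhiDim (fun _ => 0) E

/-- The upper `θ`-Assouad spectrum: the upper `Φ`-dimension with constant `Φ = 1/θ - 1`. -/
def upperAssouadSpectrum {X : Type*} [PseudoMetricSpace X] (θ : ℝ) (E : Set X) : ℝ :=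
  upperPhiDim (fun _ => 1 / θ - 1) E

/-- The lower `θ`-Assouad spectrum: the lower `Φ`-dimension with constant `Φ = 1/θ - 1`. -/
def lowerAssouadSpectrum {X : Type*} [PseudoMetricSpace X] (θ : ℝ) (E : Set X) : ℝ :=
  lowerPhiDim (fun _ => 1 / θ - 1) E

/-- The upper quasi-Assouad dimension, `lim_{θ → 1}` of the upper `θ`-Assouad spectrum;
since the upper spectrum is nondecreasing in `θ`, this limit is the supremum over
`θ ∈ (0,1)`. -/
def quasiAssouadDim {X : Type*} [PseudoMetricSpace X] (E : Set X) : ℝ :=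
  ⨆ θ : Ioo (0:ℝ) 1, upperAssouadSpectrum (θ : ℝ) E

/-- The lower quasi-Assouad dimension, `lim_{θ → 1}` of the lower `θ`-Assouad spectrum;
since the lower spectrum is nonincreasing in `θ`, this limit is the infimum over
`θ ∈ (0,1)`. -/
def quasiLowerAssouadDim {X : Type*} [PseudoMetricSpace X] (E : Set X) : ℝ :=
  ⨅ θ : Ioo (0:ℝ) 1, lowerAssouadSpectrum (θ : ℝ) E

/-- Upper box dimension `limsup_{r → 0} log N_r(E) / |log r|`. -/
def upperBoxDim {X : Type*} [PseudoMetricSpace X] (E : Set X) : ℝ :=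
  limsup (fun r : ℝ => Real.log (coverNumber r E).toReal / |Real.log r|)
    (nhdsWithin 0 (Ioo 0 1))

/-- Lower box dimension `liminf_{r → 0} log N_r(E) / |log r|`. -/
def lowerBoxDim {X : Type*} [PseudoMetricSpace X] (E : Set X) : ℝ :=
  liminf (fun r : ℝ => Real.log (coverNumber r E).toReal / |Real.log r|)
    (nhdsWithin 0 (Ioo 0 1))

/-!
A bounded set in a doubling space is totally bounded and its covering numbers grow at most
polynomially, so `log N_r(E) / |log r|` stays bounded as `r → 0`. A lower (upper) `Φ`-dimension
bound `c (R/r)^α` at one fixed admissible scale `R` bounds `N_r(E)` from below (above, after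
covering `E` by finitely many `R`-balls centred in `E`) by a constant times `r^(-α)` for all small
`r`, and the constant disappears after dividing the logarithm by `|log r|`.
-/

instance : (𝓝[Ioo (0:ℝ) 1] 0).NeBot := left_nhdsWithin_Ioo_neBot one_pos

section CoverNumber

variable {X : Type*} [PseudoMetricSpace X] {r : ℝ} {A B E : Set X}

lemma coverNumber_le_card {s : Finset X} (h : E ⊆ ⋃ x ∈ s, closedBall x r) :
    coverNumber r E ≤ s.card :=
  iInf₂_le s h

lemma coverNumber_mono (h : A ⊆ B) : coverNumber r A ≤ coverNumber r B :=
  le_iInf₂ fun _ hs => coverNumber_le_card (h.trans hs)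

lemma coverNumber_empty (r : ℝ) : coverNumber r (∅ : Set X) = 0 :=
  nonpos_iff_eq_zero.1 <| by simpa using coverNumber_le_card (s := ∅) (r := r) (empty_subset _)

lemma one_le_coverNumber (h : E.Nonempty) : 1 ≤ coverNumber r E := by
  refine le_iInf₂ fun s hs => ?_
  obtain ⟨x, hx⟩ := h
  obtain ⟨y, hy, -⟩ := mem_iUnion₂.1 (hs hx)
  exact_mod_cast Finset.card_pos.2 ⟨y, hy⟩

lemma coverNumber_union_le (A B : Set X) :
    coverNumber r (A ∪ B) ≤ coverNumber r A + coverNumber r B := by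
  classical
  simp only [coverNumber, ENNReal.iInf_add, ENNReal.add_iInf]
  refine le_iInf₂ fun t ht => le_iInf₂ fun s hs => ?_
  calc coverNumber r (A ∪ B) ≤ (s ∪ t).card := coverNumber_le_card <| by
        simpa only [Finset.set_biUnion_union] using union_subset_union hs ht
    _ ≤ s.card + t.card := by exact_mod_cast Finset.card_union_le s t

lemma coverNumber_biUnion_le {ι : Type*} (t : Finset ι) (A : ι → Set X) :
    coverNumber r (⋃ i ∈ t, A i) ≤ ∑ i ∈ t, coverNumber r (A i) := by
  classical
  induction t using Finset.induction_on with
  | empty => simp [coverNumber_empty]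
  | insert i t hi ih =>
    rw [Finset.set_biUnion_insert, Finset.sum_insert hi]
    exact (coverNumber_union_le _ _).trans (by gcongr)

lemma coverNumber_le_card_mul {t : Finset X} {R : ℝ} {a : ℝ≥0∞}
    (hE : E ⊆ ⋃ y ∈ t, closedBall y R) (h : ∀ y ∈ t, coverNumber r (closedBall y R ∩ E) ≤ a) :
    coverNumber r E ≤ t.card * a := by
  have hEq : E = ⋃ y ∈ t, closedBall y R ∩ E := by
    rw [← iUnion₂_inter]; exact (inter_eq_right.2 hE).symm
  calc coverNumber r E ≤ ∑ y ∈ t, coverNumber r (closedBall y R ∩ E) := by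
        conv_lhs => rw [hEq]
        exact coverNumber_biUnion_le t _
    _ ≤ t.card • a := Finset.sum_le_card_nsmul t _ a h
    _ = t.card * a := nsmul_eq_mul _ _

end CoverNumber

section Doubling

variable {X : Type*} [PseudoMetricSpace X]

def HasDoublingConstant (X : Type*) [PseudoMetricSpace X] (M : ℕ) : Prop :=
  ∀ (x : X) (R : ℝ), ∃ s : Finset X, s.card ≤ M ∧ closedBall x R ⊆ ⋃ y ∈ s, closedBall y (R / 2)

variable {M : ℕ}

lemma HasDoublingConstant.exists_cover_pow (hM : HasDoublingConstant X M) (k : ℕ) (x : X)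
    (R : ℝ) :
    ∃ s : Finset X, s.card ≤ M ^ k ∧ closedBall x R ⊆ ⋃ y ∈ s, closedBall y (R / 2 ^ k) := by
  classical
  induction k with
  | zero => exact ⟨{x}, by simp, by simp⟩
  | succ k ih =>
    obtain ⟨s, hcard, hcov⟩ := ih
    choose f hfcard hfcov using fun y : X => hM y (R / 2 ^ k)
    refine ⟨s.biUnion f, ?_, ?_⟩
    · calc (s.biUnion f).card ≤ ∑ y ∈ s, (f y).card := Finset.card_biUnion_le
        _ ≤ s.card * M := Finset.sum_le_card_nsmul s _ M fun y _ => hfcard y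
        _ ≤ M ^ (k + 1) := by rw [pow_succ]; exact Nat.mul_le_mul_right M hcard
    · intro z hz
      obtain ⟨y, hy, hzy⟩ := mem_iUnion₂.1 (hcov hz)
      obtain ⟨w, hw, hzw⟩ := mem_iUnion₂.1 (hfcov y hzy)
      exact mem_iUnion₂.2 ⟨w, Finset.mem_biUnion.2 ⟨y, hy, hw⟩, by rwa [pow_succ, ← div_div]⟩

lemma HasDoublingConstant.totallyBounded_closedBall (hM : HasDoublingConstant X M) (x : X)
    (D : ℝ) : TotallyBounded (closedBall x D) := by
  refine Metric.totallyBounded_iff.2 fun ε hε => ?_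
  obtain ⟨k, hk⟩ := exists_nat_gt (D / ε)
  have hDk : D / 2 ^ k < ε := by
    rw [div_lt_iff₀ (by positivity)]
    calc D < k * ε := (div_lt_iff₀ hε).1 hk
      _ ≤ ε * 2 ^ k := by rw [mul_comm]; gcongr; exact_mod_cast Nat.lt_two_pow_self.le
  obtain ⟨s, -, hs⟩ := hM.exists_cover_pow k x D
  exact ⟨s, s.finite_toSet, hs.trans (iUnion₂_mono fun y _ => closedBall_subset_ball hDk)⟩

lemma pow_le_rpow_logb_of_two_pow_le {n : ℕ} {a : ℝ} (hM : 1 ≤ M) (ha : (2:ℝ) ^ n ≤ a) :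
    (M:ℝ) ^ n ≤ a ^ Real.logb 2 M := by
  have hM0 : (0:ℝ) < M := Nat.cast_pos.2 hM
  calc (M:ℝ) ^ n = ((2:ℝ) ^ Real.logb 2 M) ^ n := by rw [Real.rpow_logb two_pos (by norm_num) hM0]
    _ = ((2:ℝ) ^ n) ^ Real.logb 2 M := by
        rw [← Real.rpow_natCast, ← Real.rpow_natCast, ← Real.rpow_mul zero_le_two,
          ← Real.rpow_mul zero_le_two, mul_comm]
    _ ≤ a ^ Real.logb 2 M :=
        Real.rpow_le_rpow (by positivity) ha (Real.logb_nonneg one_lt_two (by exact_mod_cast hM))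

lemma HasDoublingConstant.coverNumber_closedBall_le (hM : HasDoublingConstant X M) (hM1 : 1 ≤ M)
    (x : X) {r R : ℝ} (hr : 0 < r) (hrR : r ≤ R) :
    coverNumber r (closedBall x R) ≤ ENNReal.ofReal (M * (R / r) ^ Real.logb 2 M) := by
  obtain ⟨n, hn, hn'⟩ := exists_nat_pow_near ((one_le_div hr).2 hrR) one_lt_two
  obtain ⟨s, hcard, hcov⟩ := hM.exists_cover_pow (n + 1) x R
  have hradius : R / 2 ^ (n + 1) ≤ r := by
    rw [div_le_iff₀ (by positivity)]
    exact ((div_lt_iff₀ hr).1 hn').le.trans_eq (mul_comm _ _)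
  calc coverNumber r (closedBall x R) ≤ s.card :=
        coverNumber_le_card <|
          hcov.trans (iUnion₂_mono fun y _ => closedBall_subset_closedBall hradius)
    _ ≤ ENNReal.ofReal ((M:ℝ) ^ (n + 1)) := by
        rw [← Nat.cast_pow, ENNReal.ofReal_natCast]; exact_mod_cast hcard
    _ ≤ ENNReal.ofReal (M * (R / r) ^ Real.logb 2 M) := by
        rw [pow_succ']
        gcongr
        exact pow_le_rpow_logb_of_two_pow_le hM1 hn

end Doubling

section BoxDim

variable {X : Type*} [PseudoMetricSpace X] {E : Set X} {r C R α : ℝ}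

def boxRatio (E : Set X) (r : ℝ) : ℝ :=
  Real.log (coverNumber r E).toReal / |Real.log r|

lemma lowerBoxDim_eq_liminf (E : Set X) :
    lowerBoxDim E = liminf (boxRatio E) (𝓝[Ioo 0 1] 0) := rfl

lemma upperBoxDim_eq_limsup (E : Set X) :
    upperBoxDim E = limsup (boxRatio E) (𝓝[Ioo 0 1] 0) := rfl

lemma boxRatio_nonneg (hE : E.Nonempty) (hfin : coverNumber r E ≠ ⊤) : 0 ≤ boxRatio E r := by
  refine div_nonneg (Real.log_nonneg ?_) (abs_nonneg _)
  simpa using ENNReal.toReal_mono hfin (one_le_coverNumber hE)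

lemma boxRatio_le (hE : E.Nonempty) (h : coverNumber r E ≤ ENNReal.ofReal C) :
    boxRatio E r ≤ Real.log C / |Real.log r| := by
  have hC : 1 ≤ C := ENNReal.one_le_ofReal.1 ((one_le_coverNumber hE).trans h)
  have hN : 1 ≤ (coverNumber r E).toReal := by
    simpa using ENNReal.toReal_mono (ne_top_of_le_ne_top ENNReal.ofReal_ne_top h)
      (one_le_coverNumber hE)
  exact div_le_div_of_nonneg_right
    (Real.log_le_log (by linarith) (ENNReal.toReal_le_of_le_ofReal (by linarith) h)) (abs_nonneg _)

lemma le_boxRatio (hC : 0 < C) (h : ENNReal.ofReal C ≤ coverNumber r E)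
    (hfin : coverNumber r E ≠ ⊤) : Real.log C / |Real.log r| ≤ boxRatio E r := by
  unfold boxRatio
  gcongr
  exact (ENNReal.ofReal_le_iff_le_toReal hfin).1 h

lemma tendsto_abs_log_nhdsWithin_Ioo :
    Tendsto (fun r => |Real.log r|) (𝓝[Ioo 0 1] 0) atTop :=
  (tendsto_abs_atBot_atTop.comp Real.tendsto_log_nhdsGT_zero).mono_left
    (nhdsWithin_mono _ Ioo_subset_Ioi_self)

lemma tendsto_log_mul_rpow_div_abs_log (hC : 0 < C) (hR : 0 < R) (α : ℝ) :
    Tendsto (fun r => Real.log (C * (R / r) ^ α) / |Real.log r|) (𝓝[Ioo 0 1] 0) (𝓝 α) := by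
  have hlim : Tendsto (fun r => (Real.log C + α * Real.log R) / |Real.log r| + α)
      (𝓝[Ioo 0 1] 0) (𝓝 α) := by
    simpa using (tendsto_const_nhds.div_atTop tendsto_abs_log_nhdsWithin_Ioo).add_const α
  refine hlim.congr' (eventually_mem_nhdsWithin.mono fun r ⟨hr0, hr1⟩ => ?_)
  have hlog : |Real.log r| = -Real.log r := abs_of_neg (Real.log_neg hr0 hr1)
  have hlog0 : Real.log r ≠ 0 := (Real.log_neg hr0 hr1).ne
  dsimp only
  rw [Real.log_mul hC.ne' (Real.rpow_pos_of_pos (div_pos hR hr0) α).ne',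
    Real.log_rpow (div_pos hR hr0), Real.log_div hR.ne' hr0.ne', hlog]
  field_simp
  ring

lemma isBoundedUnder_le_boxRatio (hE : E.Nonempty) (hC : 0 < C) (hR : 0 < R)
    (h : ∀ᶠ r in 𝓝[Ioo 0 1] 0, coverNumber r E ≤ ENNReal.ofReal (C * (R / r) ^ α)) :
    IsBoundedUnder (· ≤ ·) (𝓝[Ioo 0 1] 0) (boxRatio E) :=
  (tendsto_log_mul_rpow_div_abs_log hC hR α).isBoundedUnder_le.mono_le
    (h.mono fun _ => boxRatio_le hE)

lemma isBoundedUnder_ge_boxRatio (hE : E.Nonempty)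
    (hfin : ∀ᶠ r in 𝓝[Ioo 0 1] 0, coverNumber r E ≠ ⊤) :
    IsBoundedUnder (· ≥ ·) (𝓝[Ioo 0 1] 0) (boxRatio E) :=
  isBoundedUnder_of_eventually_ge (hfin.mono fun _ => boxRatio_nonneg hE)

lemma upperBoxDim_le_of_coverNumber_le (hE : E.Nonempty) (hC : 0 < C) (hR : 0 < R)
    (h : ∀ᶠ r in 𝓝[Ioo 0 1] 0, coverNumber r E ≤ ENNReal.ofReal (C * (R / r) ^ α)) :
    upperBoxDim E ≤ α := by
  have hfin := h.mono fun _ => ne_top_of_le_ne_top ENNReal.ofReal_ne_top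
  rw [upperBoxDim_eq_limsup, ← (tendsto_log_mul_rpow_div_abs_log hC hR α).limsup_eq]
  exact limsup_le_limsup (h.mono fun _ => boxRatio_le hE)
    (isBoundedUnder_ge_boxRatio hE hfin).isCoboundedUnder_le
    (tendsto_log_mul_rpow_div_abs_log hC hR α).isBoundedUnder_le

lemma le_lowerBoxDim_of_le_coverNumber (hC : 0 < C) (hR : 0 < R)
    (h : ∀ᶠ r in 𝓝[Ioo 0 1] 0, ENNReal.ofReal (C * (R / r) ^ α) ≤ coverNumber r E)
    (hfin : ∀ᶠ r in 𝓝[Ioo 0 1] 0, coverNumber r E ≠ ⊤)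
    (hbdd : IsBoundedUnder (· ≤ ·) (𝓝[Ioo 0 1] 0) (boxRatio E)) :
    α ≤ lowerBoxDim E := by
  rw [lowerBoxDim_eq_liminf, ← (tendsto_log_mul_rpow_div_abs_log hC hR α).liminf_eq]
  refine liminf_le_liminf ?_ (tendsto_log_mul_rpow_div_abs_log hC hR α).isBoundedUnder_ge
    hbdd.isCoboundedUnder_ge
  filter_upwards [h, hfin, eventually_mem_nhdsWithin] with r hr hrfin hr01
  exact le_boxRatio (by have := hr01.1; positivity) hr hrfin

end BoxDim

section PhiDim

variable {X : Type*} [PseudoMetricSpace X] {Φ : ℝ → ℝ} {E : Set X}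

lemma exists_pos_lt_rpow_le_self (hΦ : ∀ x ∈ Ioo (0:ℝ) 1, 0 ≤ Φ x) {c : ℝ} (hc : 0 < c) :
    ∃ R, 0 < R ∧ R < c ∧ R ^ (1 + Φ R) ≤ R := by
  refine ⟨min c 1 / 2, by positivity, by linarith [min_le_left c 1], ?_⟩
  have hR1 : min c 1 / 2 < 1 := by linarith [min_le_right c 1]
  calc (min c 1 / 2) ^ (1 + Φ (min c 1 / 2)) ≤ (min c 1 / 2) ^ (1:ℝ) :=
        Real.rpow_le_rpow_of_exponent_ge (by positivity) hR1.le
          (by linarith [hΦ _ ⟨by positivity, hR1⟩])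
    _ = min c 1 / 2 := Real.rpow_one _

lemma eventually_nhdsWithin_Ioo_le {ρ : ℝ} (hρ : 0 < ρ) : ∀ᶠ r in 𝓝[Ioo 0 1] 0, r ≤ ρ :=
  (eventually_le_nhds hρ).filter_mono nhdsWithin_le_nhds

lemma lowerPhiDim_le_lowerBoxDim (hΦ : ∀ x ∈ Ioo (0:ℝ) 1, 0 ≤ Φ x) {z : X} (hz : z ∈ E)
    (hfin : ∀ᶠ r in 𝓝[Ioo 0 1] 0, coverNumber r E ≠ ⊤)
    (hbdd : IsBoundedUnder (· ≤ ·) (𝓝[Ioo 0 1] 0) (boxRatio E)) :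
    lowerPhiDim Φ E ≤ lowerBoxDim E := by
  refine Real.sSup_le (fun α ⟨c₁, hc₁, c₂, hc₂, hα⟩ => ?_) ?_
  · obtain ⟨R, hR, hRc, hρR⟩ := exists_pos_lt_rpow_le_self hΦ hc₁
    refine le_lowerBoxDim_of_le_coverNumber hc₂ hR ?_ hfin hbdd
    filter_upwards [eventually_mem_nhdsWithin,
      eventually_nhdsWithin_Ioo_le (Real.rpow_pos_of_pos hR _)] with r hr hrρ
    exact (hα r R hr.1 hrρ hρR hRc z hz).trans (coverNumber_mono inter_subset_right)
  · refine le_lowerBoxDim_of_le_coverNumber one_pos one_pos ?_ hfin hbdd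
    exact Eventually.of_forall fun r => by simpa using one_le_coverNumber ⟨z, hz⟩

lemma upperBoxDim_le_upperPhiDim (hΦ : ∀ x ∈ Ioo (0:ℝ) 1, 0 ≤ Φ x) {M : ℕ}
    (hM : HasDoublingConstant X M) (hM1 : 1 ≤ M) (hE : TotallyBounded E) (hne : E.Nonempty) :
    upperBoxDim E ≤ upperPhiDim Φ E := by
  refine le_csInf ⟨Real.logb 2 M, 1, one_pos, M, Nat.cast_pos.2 hM1,
    fun r R hr hrρ hρR _ z _ => (coverNumber_mono inter_subset_left).trans
      (hM.coverNumber_closedBall_le hM1 z hr (hrρ.trans hρR))⟩ ?_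
  rintro α ⟨c₁, hc₁, c₂, hc₂, hα⟩
  obtain ⟨R, hR, hRc, hρR⟩ := exists_pos_lt_rpow_le_self hΦ hc₁
  obtain ⟨t, htE, htfin, hEt⟩ := finite_approx_of_totallyBounded hE R hR
  lift t to Finset X using htfin
  have hEt' : E ⊆ ⋃ y ∈ t, closedBall y R :=
    hEt.trans (iUnion₂_mono fun y _ => ball_subset_closedBall)
  have ht : 0 < (t.card : ℝ) := by
    obtain ⟨x, hx⟩ := hne
    obtain ⟨y, hy, -⟩ := mem_iUnion₂.1 (hEt' hx)
    exact_mod_cast Finset.card_pos.2 ⟨y, hy⟩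
  refine upperBoxDim_le_of_coverNumber_le hne (mul_pos ht hc₂) hR ?_
  filter_upwards [eventually_mem_nhdsWithin,
    eventually_nhdsWithin_Ioo_le (Real.rpow_pos_of_pos hR _)] with r hr hrρ
  calc coverNumber r E ≤ t.card * ENNReal.ofReal (c₂ * (R / r) ^ α) :=
        coverNumber_le_card_mul hEt' fun y hy => hα r R hr.1 hrρ hρR hRc y (htE hy)
    _ = ENNReal.ofReal (t.card * c₂ * (R / r) ^ α) := by
        rw [mul_assoc, ENNReal.ofReal_mul ht.le, ENNReal.ofReal_natCast]

/- For `E = ∅` every `α` qualifies vacuously in both `Φ`-dimensions, and `sSup` and `sInf` of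
the unbounded set `univ` are `0` in `ℝ`. -/
lemma lowerPhiDim_empty (Φ : ℝ → ℝ) : lowerPhiDim Φ (∅ : Set X) = 0 := by
  simp [lowerPhiDim, exists_gt]

lemma upperPhiDim_empty (Φ : ℝ → ℝ) : upperPhiDim Φ (∅ : Set X) = 0 := by
  simp [upperPhiDim, exists_gt]

lemma boxRatio_empty : boxRatio (∅ : Set X) = fun _ => 0 := by
  ext r; simp [boxRatio, coverNumber_empty]

lemma lowerBoxDim_empty : lowerBoxDim (∅ : Set X) = 0 := by
  rw [lowerBoxDim_eq_liminf, boxRatio_empty, liminf_const]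

lemma upperBoxDim_empty : upperBoxDim (∅ : Set X) = 0 := by
  rw [upperBoxDim_eq_limsup, boxRatio_empty, limsup_const]

end PhiDim

/-- The `Φ`-dimensions bracket the box dimensions. -/
theorem phiDim_le_boxDim_le_phiDim {X : Type*} [MetricSpace X] (hX : IsDoublingSpace X)
    (E : Set X) (hE : Bornology.IsBounded E) (Φ : ℝ → ℝ) (hΦ : IsDimensionFunction Φ) :
    lowerPhiDim Φ E ≤ lowerBoxDim E ∧ lowerBoxDim E ≤ upperBoxDim E ∧
    upperBoxDim E ≤ upperPhiDim Φ E := by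
  rcases E.eq_empty_or_nonempty with rfl | ⟨z, hz⟩
  · simp [lowerPhiDim_empty, upperPhiDim_empty, lowerBoxDim_empty, upperBoxDim_empty]
  obtain ⟨M, hM1, hM⟩ : ∃ M, 1 ≤ M ∧ HasDoublingConstant X M := hX
  obtain ⟨D, hD, hED⟩ := hE.subset_closedBall_lt 1 z
  have hup : ∀ᶠ r in 𝓝[Ioo 0 1] 0,
      coverNumber r E ≤ ENNReal.ofReal (M * (D / r) ^ Real.logb 2 M) :=
    eventually_mem_nhdsWithin.mono fun r hr => (coverNumber_mono hED).trans
      (hM.coverNumber_closedBall_le hM1 z hr.1 (hr.2.le.trans hD.le))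
  have hfin : ∀ᶠ r in 𝓝[Ioo 0 1] 0, coverNumber r E ≠ ⊤ :=
    hup.mono fun _ => ne_top_of_le_ne_top ENNReal.ofReal_ne_top
  have hbdd := isBoundedUnder_le_boxRatio ⟨z, hz⟩ (Nat.cast_pos.2 hM1) (by linarith) hup
  exact ⟨lowerPhiDim_le_lowerBoxDim hΦ.1 hz hfin hbdd,
    liminf_le_limsup hbdd (isBoundedUnder_ge_boxRatio ⟨z, hz⟩ hfin),
    upperBoxDim_le_upperPhiDim hΦ.1 hM hM1 ((hM.totallyBounded_closedBall z D).subset hED) ⟨z, hz⟩⟩
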